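/- Let Y ∈ ℝ^{m×n} have singular value decomposition Y = UΣV^T. Then the singular value thresholding operator D_τ(Y) = U·S_τ(Σ)·V^T, obtained by applying soft-thresholding S_τ to the diagonal singular values, is the unique minimizer of Z ↦ (1/2)‖Z−Y‖_F² + τ‖Z‖_*. -/

import Mathlib

/-!
The objective `f(Z) = ½‖Z - Y‖_F² + τ‖Z‖_*` is unchanged when `Y` and `Z` are both replaced by
`Uᵀ · V`: the Frobenius norm because `U, V` are orthogonal, the nuclear norm because
`(U Z Vᵀ)ᵀ (U Z Vᵀ)` is conjugate to `Zᵀ Z`. This reduces the problem to `Y = Σ` rectangular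
diagonal with nonnegative entries. There the nuclear norm of the candidate `S = S_τ(Σ)` is the
sum of its entries, while for any `W` the diagonal bound `∑ᵢ |Wᵢᵢ| = tr(Gᵀ W) ≤ ‖W‖_*`, with `G`
the sign pattern of the diagonal of `W` (a contraction), lets the objective be compared entry by
entry with the scalar soft-thresholding inequality
`½(s - σ)² + τ s + ½(w - s)² ≤ ½(w - σ)² + τ |w|`.
Summing gives `f(S) + ½‖W - S‖_F² ≤ f(W)`, which yields both minimality and uniqueness.
-/

open Matrix

/-- The nuclear norm of a real matrix: the sum of its singular values. -/
noncomputable def nuclearNorm {m n : ℕ} (A : Matrix (Fin m) (Fin n) ℝ) : ℝ :=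
  ∑ i, Real.sqrt ((show (Aᵀ * A).IsHermitian from by
    simpa using Matrix.isHermitian_conjTranspose_mul_self A).eigenvalues i)

lemma Fin.sum_eq_dite_of_eq_zero {M : Type*} [AddCommMonoid M] {k c : ℕ} {f : Fin k → M}
    (hf : ∀ i : Fin k, (i : ℕ) ≠ c → f i = 0) :
    ∑ i, f i = if h : c < k then f ⟨c, h⟩ else 0 := by
  split_ifs with h
  · exact Finset.sum_eq_single_of_mem _ (Finset.mem_univ _) fun i _ hi =>
      hf i fun e => hi (Fin.ext e)
  · exact Finset.sum_eq_zero fun i _ => hf i fun e => h (e ▸ i.isLt)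

lemma soft_threshold_le {τ σ : ℝ} (hτ : 0 ≤ τ) (hσ : 0 ≤ σ) (w : ℝ) :
    1 / 2 * (max (σ - τ) 0 - σ) ^ 2 + τ * max (σ - τ) 0 + 1 / 2 * (w - max (σ - τ) 0) ^ 2
      ≤ 1 / 2 * (w - σ) ^ 2 + τ * |w| := by
  rcases le_total σ τ with h | h
  · rw [max_eq_right (by linarith)]
    rcases abs_cases w with ⟨hw, _⟩ | ⟨hw, _⟩ <;> rw [hw] <;> nlinarith
  · rw [max_eq_left (by linarith)]
    rcases abs_cases w with ⟨hw, _⟩ | ⟨hw, _⟩ <;> rw [hw] <;> nlinarith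

namespace Matrix

section

variable {m n R : Type*} [Fintype m] [Fintype n]

def IsContraction (G : Matrix m n ℝ) : Prop :=
  ∀ x : n → ℝ, G *ᵥ x ⬝ᵥ G *ᵥ x ≤ x ⬝ᵥ x

lemma mulVec_dotProduct_mulVec [CommSemiring R] (A B : Matrix m n R) (x : n → R) :
    A *ᵥ x ⬝ᵥ B *ᵥ x = x ⬝ᵥ (Aᵀ * B) *ᵥ x := by
  rw [← mulVec_mulVec, dotProduct_mulVec x, vecMul_transpose]

lemma trace_eq_sum_dotProduct_mulVec [CommSemiring R] [DecidableEq n] {E : Matrix n n R}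
    (hE : E * Eᵀ = 1) (M : Matrix n n R) :
    trace M = ∑ j, Eᵀ j ⬝ᵥ M *ᵥ Eᵀ j :=
  calc trace M = trace (Eᵀ * (M * E)) := by rw [trace_mul_comm, Matrix.mul_assoc, hE, mul_one]
    _ = _ := rfl

lemma trace_transpose_mul_eq_sum_sum [CommSemiring R] (A B : Matrix m n R) :
    trace (Aᵀ * B) = ∑ i, ∑ j, A i j * B i j := by
  simp only [trace, diag, mul_apply, transpose_apply]
  exact Finset.sum_comm

lemma dotProduct_self_transpose_apply [CommSemiring R] [DecidableEq n] {E : Matrix n n R}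
    (hE : Eᵀ * E = 1) (j : n) : Eᵀ j ⬝ᵥ Eᵀ j = 1 := by
  have h := congrFun (congrFun hE j) j
  rw [mul_apply', one_apply_eq] at h
  exact h

lemma dotProduct_le_sqrt_mul_sqrt (x y : n → ℝ) : x ⬝ᵥ y ≤ √(x ⬝ᵥ x) * √(y ⬝ᵥ y) := by
  simpa only [dotProduct, sq] using Real.sum_mul_le_sqrt_mul_sqrt Finset.univ x y

lemma isContraction_of_transpose_mul_self_eq_diagonal [DecidableEq n] {G : Matrix m n ℝ}
    {d : n → ℝ} (hG : Gᵀ * G = diagonal d) (hd : ∀ j, d j ≤ 1) : IsContraction G := by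
  intro x
  rw [mulVec_dotProduct_mulVec, hG]
  simp only [dotProduct, mulVec_diagonal]
  exact Finset.sum_le_sum fun j _ => by nlinarith [hd j, mul_self_nonneg (x j)]

lemma sum_sum_sq_eq_zero_iff {M : Matrix m n ℝ} : ∑ i, ∑ j, M i j ^ 2 = 0 ↔ M = 0 := by
  rw [Fintype.sum_eq_zero_iff_of_nonneg fun i => by positivity]
  simp only [funext_iff, Pi.zero_apply, Fintype.sum_eq_zero_iff_of_nonneg fun _ => sq_nonneg _]
  simp [← Matrix.ext_iff]

lemma sum_sum_sq_mul_mul_transpose [DecidableEq m] [DecidableEq n] {U : Matrix m m ℝ}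
    {V : Matrix n n ℝ} (hU : U ∈ orthogonalGroup m ℝ) (hV : V ∈ orthogonalGroup n ℝ)
    (M : Matrix m n ℝ) :
    ∑ i, ∑ j, (U * M * Vᵀ) i j ^ 2 = ∑ i, ∑ j, M i j ^ 2 := by
  simp only [sq, ← trace_transpose_mul_eq_sum_sum, transpose_mul, transpose_transpose,
    Matrix.mul_assoc]
  rw [← Matrix.mul_assoc Uᵀ U, (mem_orthogonalGroup_iff' _ _).mp hU, Matrix.one_mul,
    trace_mul_comm, Matrix.mul_assoc, Matrix.mul_assoc, (mem_orthogonalGroup_iff' _ _).mp hV,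
    Matrix.mul_one]

end

def IsRectDiag {R : Type*} [Zero R] {m n : ℕ} (A : Matrix (Fin m) (Fin n) R) : Prop :=
  ∀ (i : Fin m) (j : Fin n), (i : ℕ) ≠ j → A i j = 0

lemma IsRectDiag.transpose_mul_self {R : Type*} [CommSemiring R] {m n : ℕ}
    {A : Matrix (Fin m) (Fin n) R} (hA : A.IsRectDiag) :
    Aᵀ * A = diagonal fun j => ∑ i, A i j ^ 2 := by
  ext j k
  rw [mul_apply, diagonal_apply]
  split_ifs with hjk
  · subst hjk
    simp [sq]
  · refine Finset.sum_eq_zero fun i _ => ?_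
    by_cases hij : (i : ℕ) = j
    · rw [transpose_apply, hA i k fun h => hjk (Fin.ext (hij.symm.trans h)), mul_zero]
    · rw [transpose_apply, hA i j hij, zero_mul]

end Matrix

section NuclearNorm

variable {m n : ℕ}

lemma nuclearNorm_eq_sum_sqrt_eigenvalues (A : Matrix (Fin m) (Fin n) ℝ)
    (hA : (Aᵀ * A).IsHermitian) : nuclearNorm A = ∑ i, √(hA.eigenvalues i) :=
  rfl

/- `eigenvalues` are listed in sorted order, so the nuclear norm is better compared through the
roots of the characteristic polynomial of `Aᵀ A`. -/
lemma nuclearNorm_eq_sum_sqrt_roots (A : Matrix (Fin m) (Fin n) ℝ) :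
    nuclearNorm A = ((Aᵀ * A).charpoly.roots.map Real.sqrt).sum := by
  have hA : (Aᵀ * A).IsHermitian := by simpa using isHermitian_conjTranspose_mul_self A
  rw [nuclearNorm_eq_sum_sqrt_eigenvalues A hA, hA.roots_charpoly_eq_eigenvalues, Multiset.map_map]
  rfl

lemma nuclearNorm_mul_mul_transpose {U : Matrix (Fin m) (Fin m) ℝ}
    {V : Matrix (Fin n) (Fin n) ℝ} (hU : U ∈ orthogonalGroup (Fin m) ℝ)
    (hV : V ∈ orthogonalGroup (Fin n) ℝ) (A : Matrix (Fin m) (Fin n) ℝ) :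
    nuclearNorm (U * A * Vᵀ) = nuclearNorm A := by
  have h : (U * A * Vᵀ)ᵀ * (U * A * Vᵀ) = V * (Aᵀ * A * Vᵀ) := by
    simp only [transpose_mul, transpose_transpose, Matrix.mul_assoc]
    rw [← Matrix.mul_assoc Uᵀ U, (mem_orthogonalGroup_iff' _ _).mp hU, Matrix.one_mul]
  rw [nuclearNorm_eq_sum_sqrt_roots, nuclearNorm_eq_sum_sqrt_roots, h, charpoly_mul_comm,
    Matrix.mul_assoc, (mem_orthogonalGroup_iff' _ _).mp hV, Matrix.mul_one]

open Polynomial in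
lemma nuclearNorm_eq_of_transpose_mul_self_eq_diagonal {A : Matrix (Fin m) (Fin n) ℝ}
    {d : Fin n → ℝ} (h : Aᵀ * A = diagonal d) : nuclearNorm A = ∑ j, √(d j) := by
  have hroots : (∏ j, (X - C (d j))).roots = Finset.univ.val.map d := by
    simpa [Multiset.map_map, Function.comp_def, Finset.prod_eq_multiset_prod] using
      roots_multiset_prod_X_sub_C (Finset.univ.val.map d)
  rw [nuclearNorm_eq_sum_sqrt_roots, h, charpoly_diagonal, hroots, Multiset.map_map]
  rfl

lemma Matrix.IsRectDiag.nuclearNorm_eq_sum_sum {A : Matrix (Fin m) (Fin n) ℝ}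
    (hA : A.IsRectDiag) (hA₀ : ∀ i j, 0 ≤ A i j) : nuclearNorm A = ∑ i, ∑ j, A i j := by
  rw [nuclearNorm_eq_of_transpose_mul_self_eq_diagonal hA.transpose_mul_self]
  refine (Finset.sum_congr rfl fun j _ => ?_).trans Finset.sum_comm
  rw [Fin.sum_eq_dite_of_eq_zero (f := fun i => A i j) (hA · j),
    Fin.sum_eq_dite_of_eq_zero (f := fun i => A i j ^ 2) (c := j) fun i hi => by simp [hA i j hi]]
  by_cases h : (j : ℕ) < m
  · simp only [dif_pos h, Real.sqrt_sq (hA₀ _ _)]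
  · simp only [dif_neg h, Real.sqrt_zero]

lemma Matrix.IsContraction.trace_transpose_mul_le_nuclearNorm {G A : Matrix (Fin m) (Fin n) ℝ}
    (hG : G.IsContraction) : trace (Gᵀ * A) ≤ nuclearNorm A := by
  have hH : (Aᵀ * A).IsHermitian := by simpa using isHermitian_conjTranspose_mul_self A
  set E : Matrix (Fin n) (Fin n) ℝ := ↑hH.eigenvectorUnitary
  have hunit : ∀ j, Eᵀ j ⬝ᵥ Eᵀ j = 1 :=
    dotProduct_self_transpose_apply ((mem_orthogonalGroup_iff' _ _).mp hH.eigenvectorUnitary.2)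
  have hA : ∀ j, A *ᵥ Eᵀ j ⬝ᵥ A *ᵥ Eᵀ j = hH.eigenvalues j := fun j => by
    rw [mulVec_dotProduct_mulVec, hH.eigenvectorUnitary_transpose_apply,
      hH.mulVec_eigenvectorBasis, dotProduct_smul, ← hH.eigenvectorUnitary_transpose_apply,
      hunit, smul_eq_mul, mul_one]
  rw [trace_eq_sum_dotProduct_mulVec ((mem_orthogonalGroup_iff _ _).mp hH.eigenvectorUnitary.2),
    nuclearNorm_eq_sum_sqrt_eigenvalues A hH]
  refine Finset.sum_le_sum fun j _ => ?_
  calc Eᵀ j ⬝ᵥ (Gᵀ * A) *ᵥ Eᵀ j = G *ᵥ Eᵀ j ⬝ᵥ A *ᵥ Eᵀ j := (mulVec_dotProduct_mulVec _ _ _).symm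
    _ ≤ √(G *ᵥ Eᵀ j ⬝ᵥ G *ᵥ Eᵀ j) * √(A *ᵥ Eᵀ j ⬝ᵥ A *ᵥ Eᵀ j) := dotProduct_le_sqrt_mul_sqrt _ _
    _ ≤ √(hH.eigenvalues j) := by
      rw [hA]
      exact mul_le_of_le_one_left (Real.sqrt_nonneg _)
        (Real.sqrt_le_one.mpr ((hG _).trans (hunit j).le))

lemma sum_abs_diag_le_nuclearNorm (W : Matrix (Fin m) (Fin n) ℝ) :
    ∑ i : Fin m, ∑ j : Fin n, (if (i : ℕ) = j then |W i j| else 0) ≤ nuclearNorm W := by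
  set G : Matrix (Fin m) (Fin n) ℝ :=
    of fun i j => if (i : ℕ) = j then (SignType.sign (W i j) : ℝ) else 0
  have hGdiag : G.IsRectDiag := fun i j h => if_neg h
  have hG : G.IsContraction := by
    refine isContraction_of_transpose_mul_self_eq_diagonal hGdiag.transpose_mul_self fun j => ?_
    rw [Fin.sum_eq_dite_of_eq_zero (f := fun i => G i j ^ 2) (c := j) fun i hi => by
      simp [hGdiag i j hi]]
    split_ifs with hj
    · rcases lt_trichotomy (W ⟨j, hj⟩ j) 0 with h | h | h <;> simp [G, h]
    · exact zero_le_one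
  calc ∑ i : Fin m, ∑ j : Fin n, (if (i : ℕ) = j then |W i j| else 0) = trace (Gᵀ * W) := by
        rw [trace_transpose_mul_eq_sum_sum]
        refine Finset.sum_congr rfl fun i _ => Finset.sum_congr rfl fun j _ => ?_
        split_ifs with h <;> simp [G, h]
    _ ≤ nuclearNorm W := hG.trace_transpose_mul_le_nuclearNorm

end NuclearNorm

section Objective

variable {m n : ℕ}

noncomputable def svtObjective (τ : ℝ) (Y Z : Matrix (Fin m) (Fin n) ℝ) : ℝ :=
  1 / 2 * ∑ i, ∑ j, (Z - Y) i j ^ 2 + τ * nuclearNorm Z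

lemma svtObjective_mul_mul_transpose {U : Matrix (Fin m) (Fin m) ℝ}
    {V : Matrix (Fin n) (Fin n) ℝ} (hU : U ∈ orthogonalGroup (Fin m) ℝ)
    (hV : V ∈ orthogonalGroup (Fin n) ℝ) (τ : ℝ) (Y Z : Matrix (Fin m) (Fin n) ℝ) :
    svtObjective τ (U * Y * Vᵀ) (U * Z * Vᵀ) = svtObjective τ Y Z := by
  rw [svtObjective, ← Matrix.sub_mul, ← Matrix.mul_sub, sum_sum_sq_mul_mul_transpose hU hV,
    nuclearNorm_mul_mul_transpose hU hV, svtObjective]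

lemma svtObjective_add_le_of_isRectDiag {τ : ℝ} (hτ : 0 ≤ τ) {Sig S : Matrix (Fin m) (Fin n) ℝ}
    (hSig : Sig.IsRectDiag) (hSig₀ : ∀ i j, 0 ≤ Sig i j)
    (hS : ∀ (i : Fin m) (j : Fin n), S i j = if (i : ℕ) = j then max (Sig i j - τ) 0 else 0)
    (W : Matrix (Fin m) (Fin n) ℝ) :
    svtObjective τ Sig S + 1 / 2 * ∑ i, ∑ j, (W - S) i j ^ 2 ≤ svtObjective τ Sig W := by
  have hSdiag : S.IsRectDiag := fun i j h => by rw [hS, if_neg h]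
  have hS₀ : ∀ i j, 0 ≤ S i j := fun i j => by
    rw [hS]
    split_ifs
    exacts [le_max_right _ _, le_rfl]
  have hentry : ∀ i j, 1 / 2 * (S - Sig) i j ^ 2 + τ * S i j + 1 / 2 * (W - S) i j ^ 2
      ≤ 1 / 2 * (W - Sig) i j ^ 2 + τ * if (i : ℕ) = (j : ℕ) then |W i j| else 0 := by
    intro i j
    by_cases h : (i : ℕ) = j
    · simp only [Matrix.sub_apply, hS i j, if_pos h]
      exact soft_threshold_le hτ (hSig₀ i j) (W i j)
    · simp [hS i j, hSig i j h, h]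
  have hsum := Finset.sum_le_sum (s := Finset.univ) fun i _ =>
    Finset.sum_le_sum (s := Finset.univ) fun j _ => hentry i j
  simp only [Finset.sum_add_distrib, ← Finset.mul_sum] at hsum
  rw [svtObjective, svtObjective, hSdiag.nuclearNorm_eq_sum_sum hS₀]
  nlinarith [sum_abs_diag_le_nuclearNorm W]

lemma svtObjective_add_le {τ : ℝ} (hτ : 0 ≤ τ) {U : Matrix (Fin m) (Fin m) ℝ}
    {V : Matrix (Fin n) (Fin n) ℝ} (hU : U ∈ orthogonalGroup (Fin m) ℝ)
    (hV : V ∈ orthogonalGroup (Fin n) ℝ) {Sig S : Matrix (Fin m) (Fin n) ℝ}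
    (hSig : Sig.IsRectDiag) (hSig₀ : ∀ i j, 0 ≤ Sig i j)
    (hS : ∀ (i : Fin m) (j : Fin n), S i j = if (i : ℕ) = j then max (Sig i j - τ) 0 else 0)
    (Z : Matrix (Fin m) (Fin n) ℝ) :
    svtObjective τ (U * Sig * Vᵀ) (U * S * Vᵀ) + 1 / 2 * ∑ i, ∑ j, (Z - U * S * Vᵀ) i j ^ 2
      ≤ svtObjective τ (U * Sig * Vᵀ) Z := by
  obtain ⟨W, rfl⟩ : ∃ W, Z = U * W * Vᵀ := ⟨Uᵀ * Z * V, by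
    simp only [← Matrix.mul_assoc, (mem_orthogonalGroup_iff _ _).mp hU, Matrix.one_mul]
    rw [Matrix.mul_assoc, (mem_orthogonalGroup_iff _ _).mp hV, Matrix.mul_one]⟩
  rw [svtObjective_mul_mul_transpose hU hV, svtObjective_mul_mul_transpose hU hV,
    ← Matrix.sub_mul, ← Matrix.mul_sub, sum_sum_sq_mul_mul_transpose hU hV]
  exact svtObjective_add_le_of_isRectDiag hτ hSig hSig₀ hS W

end Objective

/-- Singular value thresholding: if `Y = U Sig Vᵀ` is a singular value decomposition of
`Y ∈ ℝ^{m×n}` (with `U, V` orthogonal and `Sig` a rectangular diagonal matrix with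
nonnegative diagonal), then `D_τ(Y) = U S_τ(Sig) Vᵀ`, obtained by soft-thresholding the
singular values, is the unique minimizer of `Z ↦ (1/2)‖Z - Y‖_F² + τ‖Z‖_*`. -/
theorem singular_value_thresholding (m n : ℕ) (τ : ℝ) (hτ : 0 < τ)
    (Y : Matrix (Fin m) (Fin n) ℝ)
    (U : Matrix (Fin m) (Fin m) ℝ) (V : Matrix (Fin n) (Fin n) ℝ)
    (Sig : Matrix (Fin m) (Fin n) ℝ)
    (hU : U ∈ Matrix.orthogonalGroup (Fin m) ℝ)
    (hV : V ∈ Matrix.orthogonalGroup (Fin n) ℝ)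
    (hSigdiag : ∀ (i : Fin m) (j : Fin n), (i : ℕ) ≠ (j : ℕ) → Sig i j = 0)
    (hSignonneg : ∀ i j, 0 ≤ Sig i j)
    (hSVD : Y = U * Sig * Vᵀ)
    (SτSig : Matrix (Fin m) (Fin n) ℝ)
    (hSτSig : ∀ (i : Fin m) (j : Fin n), SτSig i j = if (i : ℕ) = (j : ℕ) then max (Sig i j - τ) 0 else 0) :
    (∀ Z : Matrix (Fin m) (Fin n) ℝ,
      (1 / 2) * (∑ i, ∑ j, (U * SτSig * Vᵀ - Y) i j ^ 2) + τ * nuclearNorm (U * SτSig * Vᵀ)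
        ≤ (1 / 2) * (∑ i, ∑ j, (Z - Y) i j ^ 2) + τ * nuclearNorm Z) ∧
    (∀ Z : Matrix (Fin m) (Fin n) ℝ,
      (∀ W : Matrix (Fin m) (Fin n) ℝ,
        (1 / 2) * (∑ i, ∑ j, (Z - Y) i j ^ 2) + τ * nuclearNorm Z
          ≤ (1 / 2) * (∑ i, ∑ j, (W - Y) i j ^ 2) + τ * nuclearNorm W) →
      Z = U * SτSig * Vᵀ) := by
  subst hSVD
  have key := svtObjective_add_le hτ.le hU hV hSigdiag hSignonneg hSτSig
  simp only [svtObjective] at key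
  have hsq_nonneg : ∀ M : Matrix (Fin m) (Fin n) ℝ, 0 ≤ ∑ i, ∑ j, M i j ^ 2 := fun M => by
    positivity
  refine ⟨fun Z => ?_, fun Z hZ => ?_⟩
  · linarith [key Z, hsq_nonneg (Z - U * SτSig * Vᵀ)]
  · rw [← sub_eq_zero, ← sum_sum_sq_eq_zero_iff]
    refine le_antisymm ?_ (hsq_nonneg _)
    linarith [key Z, hZ (U * SτSig * Vᵀ)]
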